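/- Let e = (f_e, a_e) be an idempotent of IS_m ≀_p IS_n, let N_e = {ζ ∈ IS_m ≀_p IS_n : eζ = ζ}, and let R be any R-cross-section of IS_m ≀_p IS_n. Then |N_e ∩ R| = ∏_{x ∈ dom(a_e)} (1 + 2^{|dom(f_e(x))|}). -/

import Mathlib

open scoped Classical

/-- `IS n` is the full inverse symmetric semigroup: all partial bijections of `Fin n`;
multiplication is composition of partial maps (maps acting on the right). -/
abbrev IS (n : ℕ) : Type := PEquiv (Fin n) (Fin n)

noncomputable section
namespace ISW

instance {n : ℕ} : Mul (IS n) := ⟨PEquiv.trans⟩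
instance {n : ℕ} : One (IS n) := ⟨PEquiv.refl _⟩

/-- The domain of a partial bijection. -/
def pdom {n : ℕ} (f : IS n) : Set (Fin n) := {x | (f x).isSome}

/-- The range of a partial bijection. -/
def pran {n : ℕ} (f : IS n) : Set (Fin n) := {y | (f.symm y).isSome}

/-- Green's R-relation on a semigroup (with identity): `u R v` iff `uS = vS`. -/
def GreenR {S : Type*} [Mul S] (u v : S) : Prop :=
  {w | ∃ s, w = u * s} = {w | ∃ s, w = v * s}

/-- Green's L-relation on a semigroup (with identity): `u L v` iff `Su = Sv`. -/
def GreenL {S : Type*} [Mul S] (u v : S) : Prop :=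
  {w | ∃ s, w = s * u} = {w | ∃ s, w = s * v}

/-- An R-cross-section: a subsemigroup containing exactly one element of every
Green R-class. -/
def IsRCrossSection {S : Type*} [Mul S] (T : Set S) : Prop :=
  (∀ a ∈ T, ∀ b ∈ T, a * b ∈ T) ∧ ∀ x : S, ∃! t, t ∈ T ∧ GreenR x t

/-- An L-cross-section: a subsemigroup containing exactly one element of every
Green L-class. -/
def IsLCrossSection {S : Type*} [Mul S] (T : Set S) : Prop :=
  (∀ a ∈ T, ∀ b ∈ T, a * b ∈ T) ∧ ∀ x : S, ∃! t, t ∈ T ∧ GreenL x t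

/-- `φ` realizes a semigroup isomorphism from `T₁` onto `T₂`. -/
def IsSemiIso {S₁ S₂ : Type*} [Mul S₁] [Mul S₂] (T₁ : Set S₁) (T₂ : Set S₂)
    (φ : S₁ → S₂) : Prop :=
  Set.BijOn φ T₁ T₂ ∧ ∀ a ∈ T₁, ∀ b ∈ T₁, φ (a * b) = φ a * φ b

/-- The partial wreath product `IS m ≀_p IS n`: pairs `(f, a)` with `a ∈ IS n` and
`f` a partial map from `Fin n` to `IS m` whose domain equals the domain of `a`. -/
structure PW (m n : ℕ) where
  base : IS n
  fib : Fin n → Option (IS m)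
  dom_eq : ∀ x, (fib x).isSome ↔ (base x).isSome

/-- Multiplication of the partial wreath product: `(f,a)·(g,b) = (f g^a, ab)`. -/
instance {m n : ℕ} : Mul (PW m n) where
  mul u v :=
    { base := u.base * v.base
      fib := fun x => Option.map₂ (· * ·) (u.fib x) ((u.base x).bind v.fib)
      dom_eq := by
        intro x
        show _ ↔ (((u.base x).bind v.base)).isSome
        cases h : u.base x with
        | none =>
          have : u.fib x = none := by
            have := (u.dom_eq x)
            simp [h] at this
            simpa using Option.not_isSome_iff_eq_none.mp (by simp [this])
          simp [h, this, Option.map₂]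
        | some y =>
          have hf : (u.fib x).isSome := (u.dom_eq x).mpr (by simp [h])
          obtain ⟨s, hs⟩ := Option.isSome_iff_exists.mp hf
          cases h2 : v.base y with
          | none =>
            have : v.fib y = none := by
              have := (v.dom_eq y)
              simp [h2] at this
              simpa using Option.not_isSome_iff_eq_none.mp (by simp [this])
            simp [h, h2, hs, this, Option.map₂]
          | some z =>
            have hg : (v.fib y).isSome := (v.dom_eq y).mpr (by simp [h2])
            obtain ⟨t, ht⟩ := Option.isSome_iff_exists.mp hg
            simp [h, h2, hs, ht, Option.map₂] }

/-- The identity of the partial wreath product. -/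
instance {m n : ℕ} : One (PW m n) where
  one :=
    { base := 1
      fib := fun _ => some 1
      dom_eq := by intro x; simp; rfl }

/-- `chainFun L j x`: with `L` listing the elements of a block in increasing order and
`0 ≤ j < |L|` (`j` is the 0-based version of the paper's index), this is the value at `x` of
the chain `a_{i,j}`: the partial bijection with domain everything except `L[j]`,
sending `L[l] ↦ L[l+1]` for `l < j` and fixing all other points. -/
def chainFun {n : ℕ} (L : List (Fin n)) (j : ℕ) (x : Fin n) : Option (Fin n) :=
  if x ∈ L then
    if L.idxOf x = j then none
    else if L.idxOf x < j then L[L.idxOf x + 1]?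
    else some x
  else some x

/-- The generators `a_{i,j}` attached to an ordered decomposition with blocks `B i`. -/
def RGens {n s : ℕ} (B : Fin s → List (Fin n)) : Set (IS n) :=
  {a : IS n | ∃ i : Fin s, ∃ j : ℕ, j < (B i).length ∧ ∀ x, a x = chainFun (B i) j x}

/-- `R(M⃗₁, …, M⃗ₛ)`: the subsemigroup of `IS n` generated by the chains `a_{i,j}`
together with the identity map. -/
def RSec {n s : ℕ} (B : Fin s → List (Fin n)) : Set (IS n) :=
  (Subsemigroup.closure (RGens B ∪ {1}) : Subsemigroup (IS n))

/-- A decomposition of `Fin n` into disjoint nonempty blocks, each block equipped with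
a linear order, recorded by listing the elements of each block in increasing order. -/
structure OrderedPartition (n s : ℕ) where
  B : Fin s → List (Fin n)
  nonempty : ∀ i, B i ≠ []
  nodup : ∀ i, (B i).Nodup
  disjoint : ∀ i j, i ≠ j → ∀ x, x ∈ B i → x ∉ B j
  cover : ∀ x, ∃ i, x ∈ B i

/-- The chain `a_{i,j}` of the block listed by `L`, viewed inside `IS(M_i)`, i.e. embedded
into `IS n` as a partial bijection whose domain is contained in the block: it is defined on
`L` minus `L[j]`, sends `L[l] ↦ L[l+1]` for `l < j` and fixes the other points of `L`. -/
def chainFunB {n : ℕ} (L : List (Fin n)) (j : ℕ) (x : Fin n) : Option (Fin n) :=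
  if x ∈ L then
    if L.idxOf x = j then none
    else if L.idxOf x < j then L[L.idxOf x + 1]?
    else some x
  else none

/-- The generators of `R(M⃗)` inside `IS(M)` (embedded in `IS n`), `M` listed by `L`. -/
def BlockGens {n : ℕ} (L : List (Fin n)) : Set (IS n) :=
  {a : IS n | ∃ j : ℕ, j < L.length ∧ ∀ x, a x = chainFunB L j x}

/-- The identity of `IS(M)` (embedded in `IS n`): the identity map of the block listed by `L`. -/
def idOn {n : ℕ} (L : List (Fin n)) : Set (IS n) :=
  {a : IS n | ∀ x, a x = if x ∈ L then some x else none}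

/-- The R-cross-section `R(M⃗)` of `IS(M)`, embedded into `IS n`, for the block listed by `L`. -/
def RSecBlock {n : ℕ} (L : List (Fin n)) : Set (IS n) :=
  (Subsemigroup.closure (BlockGens L ∪ idOn L) : Subsemigroup (IS n))

/-- The wreath product `R_i ≀_p R(M⃗_i)` where `R(M⃗_i) ⊆ IS(M_i)`, `M_i` listed by `L`,
and `R_i = T ⊆ IS m`, realized inside `PW m n` via the natural embedding
`IS m ≀_p IS(M_i) ⊆ IS m ≀_p IS n`. -/
def WBlock (m n : ℕ) (L : List (Fin n)) (T : Set (IS m)) : Set (PW m n) :=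
  {u : PW m n | u.base ∈ RSecBlock L ∧ ∀ x f, u.fib x = some f → f ∈ T}

/-- The element `e' = (0̄, 1)` of `IS m ≀_p IS n`: the second component is the identity of
`IS n` and the first component sends every point to the empty map `0` of `IS m`. -/
def ezero (m n : ℕ) : PW m n where
  base := 1
  fib := fun _ => some ⊥
  dom_eq := by intro x; simp; rfl

/-! The R-class of `(f, a)` in `IS m ≀_p IS n` is determined by its domain profile
`x ↦ dom (f x)`, undefined outside `dom a`. Profiles can only shrink under right multiplication,
and `u u⁻¹` is the partial identity carrying the profile of `u`, which fixes on the left every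
element of smaller profile; so `u R v` iff `u` and `v` have the same profile, and, for an
idempotent `e`, `e ζ = ζ` iff the profile of `ζ` lies below that of `e`. An R-cross-section has
exactly one element of each profile, hence `N_e ∩ R` is in bijection with the profiles below that
of `e`: at each `x ∈ dom a_e` one may choose "undefined" or any of the `2^{|dom f_e(x)|}`
subsets of `dom f_e(x)`. -/

theorem _root_.PEquiv.ofSet_trans_of_forall_isSome {α β : Type*} {s : Set α}
    [DecidablePred (· ∈ s)] {f : α ≃. β} (h : ∀ a, (f a).isSome → a ∈ s) :
    (PEquiv.ofSet s).trans f = f := by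
  ext a b
  by_cases ha : a ∈ s
  · simp [PEquiv.trans_eq_some, PEquiv.ofSet_eq_some_iff, ha]
  · have hfa : f a = none := Option.not_isSome_iff_eq_none.mp (mt (h a) ha)
    simp [PEquiv.trans_eq_some, PEquiv.ofSet_eq_some_iff, ha, hfa]

theorem _root_.Nat.card_Iic_pi {ι : Type*} [Fintype ι] [DecidableEq ι] {α : ι → Type*}
    [∀ i, PartialOrder (α i)] [∀ i, LocallyFiniteOrderBot (α i)] (b : ∀ i, α i) :
    Nat.card (Set.Iic b) = ∏ i, Nat.card (Set.Iic (b i)) := by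
  simp only [← Finset.coe_Iic, Nat.card_coe_set_eq, Set.ncard_coe_finset]
  exact Pi.card_Iic b

theorem _root_.Nat.card_Iic_withBot_finset {α : Type*} [Fintype α] [DecidableEq α]
    (A : Finset α) : Nat.card (Set.Iic (A : WithBot (Finset α))) = 1 + 2 ^ A.card := by
  rw [← Finset.coe_Iic, Nat.card_coe_set_eq, Set.ncard_coe_finset, ← Finset.Icc_bot,
    WithBot.Icc_bot_coe]
  exact (Finset.card_insertNone _).trans (by rw [Finset.card_Iic_finset, add_comm])

theorem IsRCrossSection.card_preimage_inter {S β : Type*} [Mul S] {T : Set S}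
    (hT : IsRCrossSection T) {φ : S → β} (hφ : ∀ u v, GreenR u v ↔ φ u = φ v)
    (hsurj : Function.Surjective φ) (P : Set β) :
    Nat.card ↥(φ ⁻¹' P ∩ T) = Nat.card P := by
  refine Nat.card_congr (Set.BijOn.equiv φ ⟨fun u hu => hu.1, ?_, ?_⟩)
  · intro u hu v hv huv
    obtain ⟨t, -, ht⟩ := hT.2 u
    exact (ht u ⟨hu.2, (hφ u u).mpr rfl⟩).trans (ht v ⟨hv.2, (hφ u v).mpr huv⟩).symm
  · intro b hb
    obtain ⟨s, rfl⟩ := hsurj b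
    obtain ⟨t, ⟨htT, hst⟩, -⟩ := hT.2 s
    have hts : φ t = φ s := ((hφ s t).mp hst).symm
    exact ⟨t, ⟨show φ t ∈ P from hts ▸ hb, htT⟩, hts⟩

variable {m n : ℕ}

lemma IS.mul_apply (a b : IS n) (x : Fin n) : (a * b) x = (a x).bind b := rfl

lemma IS.mul_assoc (a b c : IS n) : a * b * c = a * (b * c) := PEquiv.trans_assoc a b c

lemma IS.mul_one (a : IS n) : a * 1 = a := PEquiv.trans_refl a

def domFinset (f : IS m) : Finset (Fin m) := Finset.univ.filter fun w => (f w).isSome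

lemma domFinset_mul_subset (f g : IS m) : domFinset (f * g) ⊆ domFinset f := by
  intro w hw
  rw [domFinset, Finset.mem_filter_univ] at hw ⊢
  exact Option.isSome_of_isSome_bind hw

lemma domFinset_ofSet (A : Finset (Fin m)) : domFinset (PEquiv.ofSet (A : Set (Fin m))) = A := by
  ext w
  by_cases hw : w ∈ A <;> simp [domFinset, PEquiv.ofSet, hw]

lemma coe_domFinset (f : IS m) : (domFinset f : Set (Fin m)) = {w | (f w).isSome} := by
  simp [domFinset]

lemma IS.mul_ofSet_of_domFinset_subset {A : Finset (Fin m)} {g : IS m} (h : domFinset g ⊆ A) :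
    PEquiv.ofSet (A : Set (Fin m)) * g = g :=
  PEquiv.ofSet_trans_of_forall_isSome fun w hw => h (by simpa [domFinset] using hw)

namespace PW

protected lemma ext {u v : PW m n} (hbase : u.base = v.base) (hfib : u.fib = v.fib) : u = v := by
  cases u; cases v; simp_all

lemma fib_eq_none_iff (u : PW m n) (x : Fin n) : u.fib x = none ↔ u.base x = none := by
  simpa only [Option.not_isSome_iff_eq_none] using not_congr (u.dom_eq x)

lemma exists_fib_eq_some {u : PW m n} {x y : Fin n} (h : u.base x = some y) :
    ∃ f, u.fib x = some f :=
  Option.isSome_iff_exists.mp ((u.dom_eq x).mpr (by simp [h]))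

lemma mul_base (u v : PW m n) : (u * v).base = u.base * v.base := rfl

lemma mul_fib (u v : PW m n) (x : Fin n) :
    (u * v).fib x = Option.map₂ (· * ·) (u.fib x) ((u.base x).bind v.fib) := rfl

lemma mul_fib_of_base_eq_some {u : PW m n} (v : PW m n) {x y : Fin n}
    (h : u.base x = some y) : (u * v).fib x = (u.fib x).bind fun f => (v.fib y).map (f * ·) := by
  obtain ⟨f, hf⟩ := exists_fib_eq_some h
  cases hg : v.fib y <;> simp [mul_fib, h, hf, hg]

protected lemma mul_assoc (u v w : PW m n) : u * v * w = u * (v * w) := by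
  refine PW.ext (PEquiv.trans_assoc _ _ _) (funext fun x => ?_)
  rcases hx : u.base x with _ | y
  · have hf := (u.fib_eq_none_iff x).mpr hx
    simp [mul_fib, mul_base, IS.mul_apply, hx, hf]
  rcases hy : v.base y with _ | z
  · have hg := (v.fib_eq_none_iff y).mpr hy
    simp [mul_fib, mul_base, IS.mul_apply, hx, hy, hg]
  rw [mul_fib_of_base_eq_some (y := z) _ (by simp [mul_base, IS.mul_apply, hx, hy]),
    mul_fib_of_base_eq_some _ hx, mul_fib_of_base_eq_some _ hx, mul_fib_of_base_eq_some _ hy]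
  cases u.fib x <;> cases v.fib y <;> cases w.fib z <;>
    simp [IS.mul_assoc]

protected lemma mul_one (u : PW m n) : u * 1 = u := by
  refine PW.ext (PEquiv.trans_refl _) (funext fun x => ?_)
  rcases hx : u.base x with _ | y
  · simp [mul_fib, hx, (u.fib_eq_none_iff x).mpr hx]
  · rw [mul_fib_of_base_eq_some _ hx]
    cases u.fib x <;> simp [show (1 : PW m n).fib y = some 1 from rfl, IS.mul_one]

end PW

def domProfile (u : PW m n) (x : Fin n) : WithBot (Finset (Fin m)) := (u.fib x).map domFinset

lemma domProfile_of_fib_eq_some {u : PW m n} {x : Fin n} {f : IS m} (h : u.fib x = some f) :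
    domProfile u x = domFinset f := by
  rw [domProfile, h]
  rfl

lemma domProfile_eq_bot_iff (u : PW m n) (x : Fin n) :
    domProfile u x = ⊥ ↔ u.base x = none := by
  rw [← u.fib_eq_none_iff]
  exact Option.map_eq_none_iff

def pinv (u : PW m n) : PW m n where
  base := u.base.symm
  fib y := (u.base.symm y).bind fun x => (u.fib x).map PEquiv.symm
  dom_eq y := by
    rcases h : u.base.symm y with _ | x
    · simp
    · obtain ⟨f, hf⟩ := u.exists_fib_eq_some ((PEquiv.eq_some_iff u.base).mp h)
      simp [hf]

def ofProfile (d : Fin n → WithBot (Finset (Fin m))) : PW m n where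
  base := PEquiv.ofSet {x | d x ≠ ⊥}
  fib x := Option.map (fun A : Finset (Fin m) => PEquiv.ofSet (A : Set (Fin m))) (d x)
  dom_eq x := by
    cases h : d x <;> simp [PEquiv.ofSet, h] <;> rfl

lemma ofProfile_base_of_ne_bot {d : Fin n → WithBot (Finset (Fin m))} {x : Fin n}
    (h : d x ≠ ⊥) :
    (ofProfile d).base x = some x := by
  simp [ofProfile, PEquiv.ofSet, h]

lemma ofProfile_fib_of_eq_coe {d : Fin n → WithBot (Finset (Fin m))} {x : Fin n}
    {A : Finset (Fin m)} (h : d x = A) :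
    (ofProfile d).fib x = some (PEquiv.ofSet (A : Set (Fin m))) := by
  simp [ofProfile, h]; rfl

lemma ofProfile_base_of_eq_bot {d : Fin n → WithBot (Finset (Fin m))} {x : Fin n}
    (h : d x = ⊥) :
    (ofProfile d).base x = none := by
  simp [ofProfile, PEquiv.ofSet, h]

lemma domProfile_ofProfile (d : Fin n → WithBot (Finset (Fin m))) :
    domProfile (ofProfile d) = d := by
  funext x
  cases h : d x with
  | bot => exact (domProfile_eq_bot_iff _ x).mpr (ofProfile_base_of_eq_bot h)
  | coe A => rw [domProfile_of_fib_eq_some (ofProfile_fib_of_eq_coe h), domFinset_ofSet]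

lemma domProfile_mul_le (u v : PW m n) : domProfile (u * v) ≤ domProfile u := by
  intro x
  rcases hx : u.base x with _ | y
  · rw [(domProfile_eq_bot_iff _ x).mpr (by simp [PW.mul_base, IS.mul_apply, hx])]
    exact bot_le
  obtain ⟨f, hf⟩ := u.exists_fib_eq_some hx
  rw [domProfile_of_fib_eq_some hf]
  rcases hg : v.fib y with _ | g
  · rw [(domProfile_eq_bot_iff _ x).mpr]
    · exact bot_le
    · rw [PW.mul_base, IS.mul_apply, hx, Option.bind_some, ← v.fib_eq_none_iff, hg]
  · rw [domProfile_of_fib_eq_some (f := f * g) (by simp [PW.mul_fib_of_base_eq_some v hx, hf, hg])]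
    exact WithBot.coe_le_coe.mpr (domFinset_mul_subset f g)

lemma mul_pinv (u : PW m n) : u * pinv u = ofProfile (domProfile u) := by
  refine PW.ext ?_ (funext fun x => ?_)
  · rw [PW.mul_base]
    refine (PEquiv.self_trans_symm u.base).trans (PEquiv.ext fun x => ?_)
    simp [ofProfile, PEquiv.ofSet, domProfile_eq_bot_iff, Option.isSome_iff_ne_none]
  rcases hx : u.base x with _ | y
  · have hd : domProfile u x = ⊥ := (domProfile_eq_bot_iff u x).mpr hx
    rw [PW.mul_fib, (u.fib_eq_none_iff x).mpr hx, Option.map₂_none_left,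
      ((ofProfile _).fib_eq_none_iff x).mpr (ofProfile_base_of_eq_bot hd)]
  have hy : u.base.symm y = some x := (PEquiv.eq_some_iff u.base).mpr hx
  obtain ⟨f, hf⟩ := u.exists_fib_eq_some hx
  rw [PW.mul_fib_of_base_eq_some _ hx, ofProfile_fib_of_eq_coe (domProfile_of_fib_eq_some hf)]
  simp only [pinv, hy, hf, coe_domFinset, Option.bind_some, Option.map_some]
  exact congrArg some (PEquiv.self_trans_symm f)

lemma ofProfile_mul_of_le {d : Fin n → WithBot (Finset (Fin m))} {w : PW m n}
    (h : domProfile w ≤ d) : ofProfile d * w = w := by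
  have hdom : ∀ x, (w.base x).isSome → d x ≠ ⊥ := fun x hx hd =>
    by simpa [(domProfile_eq_bot_iff w x).not.mpr (Option.isSome_iff_ne_none.mp hx), hd] using h x
  refine PW.ext (PEquiv.ofSet_trans_of_forall_isSome hdom) (funext fun x => ?_)
  cases hd : d x with
  | bot =>
    have hw : w.base x = none := (domProfile_eq_bot_iff w x).mp (le_bot_iff.mp (hd ▸ h x))
    simp [PW.mul_fib, ofProfile_base_of_eq_bot hd, (w.fib_eq_none_iff x).mpr hw]
  | coe A =>
    rw [PW.mul_fib_of_base_eq_some _ (ofProfile_base_of_ne_bot (hd ▸ WithBot.coe_ne_bot)),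
      ofProfile_fib_of_eq_coe hd, Option.bind_some]
    rcases hw : w.fib x with _ | g
    · rfl
    · have hgA : domFinset g ⊆ A :=
        WithBot.coe_le_coe.mp (hd ▸ domProfile_of_fib_eq_some hw ▸ h x)
      rw [Option.map_some, IS.mul_ofSet_of_domFinset_subset hgA]

theorem greenR_iff_domProfile_eq (u v : PW m n) : GreenR u v ↔ domProfile u = domProfile v := by
  constructor
  · intro h
    have mem_self (w : PW m n) : w ∈ {w' | ∃ s, w' = w * s} := ⟨1, (PW.mul_one w).symm⟩
    obtain ⟨s, hs⟩ : u ∈ {w | ∃ s, w = v * s} := h ▸ mem_self u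
    obtain ⟨t, ht⟩ : v ∈ {w | ∃ s, w = u * s} := h.symm ▸ mem_self v
    exact le_antisymm (hs ▸ domProfile_mul_le v s) (ht ▸ domProfile_mul_le u t)
  · intro h
    have key : ∀ a b : PW m n, domProfile a = domProfile b → a = b * (pinv b * a) :=
      fun a b hab => by
        rw [← PW.mul_assoc, mul_pinv, ← hab, ofProfile_mul_of_le le_rfl]
    ext w
    constructor
    · rintro ⟨s, rfl⟩
      exact ⟨pinv v * u * s, by rw [← PW.mul_assoc, ← key u v h]⟩
    · rintro ⟨s, rfl⟩
      exact ⟨pinv u * v * s, by rw [← PW.mul_assoc, ← key v u h.symm]⟩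

theorem mul_eq_self_iff_domProfile_le {e : PW m n} (he : e * e = e) (ζ : PW m n) :
    e * ζ = ζ ↔ domProfile ζ ≤ domProfile e := by
  refine ⟨fun h => h ▸ domProfile_mul_le e ζ, fun h => ?_⟩
  have hζ : e * pinv e * ζ = ζ := by rw [mul_pinv, ofProfile_mul_of_le h]
  rw [← hζ, ← PW.mul_assoc, ← PW.mul_assoc, he]

theorem card_Iic_domProfile (u : PW m n) :
    Nat.card (Set.Iic (domProfile u)) =
      ∏ x ∈ Finset.univ.filter (fun x : Fin n => (u.base x).isSome),
        (1 + 2 ^ ((u.fib x).elim 0 fun f => (domFinset f).card)) := by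
  rw [Nat.card_Iic_pi, Finset.prod_filter]
  refine Finset.prod_congr rfl fun x _ => ?_
  rcases hx : u.base x with _ | y
  · simp [(domProfile_eq_bot_iff u x).mpr hx]
  · obtain ⟨f, hf⟩ := u.exists_fib_eq_some hx
    rw [domProfile_of_fib_eq_some hf, Nat.card_Iic_withBot_finset, hf]
    rfl

/-- for an idempotent `e = (f_e, a_e)` of `IS m ≀_p IS n`, with
`N_e = {ζ : e ζ = ζ}`, and any R-cross-section `R` of `IS m ≀_p IS n`,
`|N_e ∩ R| = ∏_{x ∈ dom a_e} (1 + 2^{|dom f_e(x)|})`. -/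
theorem card_Ne_inter_rcross (m n : ℕ) (e : PW m n) (he : e * e = e)
    (R : Set (PW m n)) (hR : IsRCrossSection R) :
    Nat.card ↥({ζ : PW m n | e * ζ = ζ} ∩ R) =
      ∏ x ∈ Finset.univ.filter (fun x : Fin n => (e.base x).isSome),
        (1 + 2 ^ ((e.fib x).elim 0
          (fun f => (Finset.univ.filter fun w : Fin m => (f w).isSome).card))) := by
  have hNe : {ζ : PW m n | e * ζ = ζ} = domProfile ⁻¹' Set.Iic (domProfile e) :=
    Set.ext (mul_eq_self_iff_domProfile_le he)
  rw [hNe, hR.card_preimage_inter greenR_iff_domProfile_eq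
    (fun d => ⟨ofProfile d, domProfile_ofProfile d⟩), card_Iic_domProfile]
  rfl

end ISW
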